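/- arXiv:1311.0481 — 2 statements merged into one kernel-verified Lean document; each statement's English description precedes it below -/
import Mathlib

section
/- Each operator U_BF(Z,z) preserves the Bargmann-Fock space: if φ(W) = exp(-(μ/4)|W|²) f(W) with f entire and ∫_{ℂⁿ} exp(-(μ/2)|W|²)|f(W)|² dW < ∞ (μ > 0), then U_BF(Z,z)φ has the same form and the same norm (U_BF(Z,z) is unitary on this space). -/
open Complex MeasureTheory

/-- The Bargmann–Fock operators on `ℂⁿ` (here `|Z|² = ∑ᵢ |Zᵢ|²`):
`(U_BF(Z,z)φ)(Z₀) = exp(iμ(z + (1/2)Im((1/2)Z² + conj(Z)·Z₀))) φ(Z₀ - Z)`. -/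
noncomputable def UBF {n : ℕ} (μ : ℝ) (g : (Fin n → ℂ) × ℝ)
    (φ : (Fin n → ℂ) → ℂ) : (Fin n → ℂ) → ℂ :=
  fun Z₀ => Complex.exp (Complex.I * (μ : ℂ) *
      ((g.2 : ℂ) + ((1/2 : ℝ) *
        ((1/2 : ℂ) * ∑ i, (g.1 i)^2 + ∑ i, (starRingEnd ℂ) (g.1 i) * Z₀ i).im : ℝ))) *
    φ (Z₀ - g.1)

/-! Completing the square, `|W - Z|² = |W|² + |Z|² - 2 Re ⟨Z, W⟩`, shows that the phase of
`UBF μ (Z, z)` times `exp (-(μ/4)|W - Z|²)` is `exp (-(μ/4)|W|²)` times the exponential of a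
holomorphic affine function of `W`, so `UBF μ (Z, z) φ_f = φ_g` with `g` entire. The modulus of
that exponential turns the weight `exp (-(μ/2)|W|²)` into `exp (-(μ/2)|W - Z|²)`, and translation
invariance of Lebesgue measure gives the norm identity. -/

open ComplexConjugate

section FockShift

variable {ι : Type*} [Fintype ι]

theorem sum_norm_sub_sq (W Z : ι → ℂ) :
    ∑ i, ‖W i - Z i‖ ^ 2
      = ∑ i, ‖W i‖ ^ 2 + ∑ i, ‖Z i‖ ^ 2 - 2 * (∑ i, conj (Z i) * W i).re := by
  simp only [Complex.sq_norm, Complex.normSq_sub, Complex.re_sum, mul_comm (W _),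
    Finset.sum_sub_distrib, Finset.sum_add_distrib, Finset.mul_sum]

/-- The exponent of the holomorphic multiplier produced by `UBF μ (Z, z)` once the Gaussian
factor `exp (-(μ/4)|W|²)` is pulled out. -/
noncomputable def fockShiftExponent (μ : ℝ) (Z : ι → ℂ) (z : ℝ) (W : ι → ℂ) : ℂ :=
  I * μ * (z + ((1/2 : ℝ) * ((1/2 : ℂ) * ∑ i, Z i ^ 2).im : ℝ))
    - (μ / 4 * ∑ i, ‖Z i‖ ^ 2 : ℝ) + (μ / 2 : ℝ) * ∑ i, conj (Z i) * W i

noncomputable def fockShift (μ : ℝ) (Z : ι → ℂ) (z : ℝ) (f : (ι → ℂ) → ℂ) :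
    (ι → ℂ) → ℂ :=
  fun W => exp (fockShiftExponent μ Z z W) * f (W - Z)

theorem Differentiable.fockShift {f : (ι → ℂ) → ℂ} (hf : Differentiable ℂ f)
    (μ : ℝ) (Z : ι → ℂ) (z : ℝ) : Differentiable ℂ (fockShift μ Z z f) := by
  have hexp : Differentiable ℂ (fockShiftExponent μ Z z) := by
    unfold fockShiftExponent
    fun_prop
  exact hexp.cexp.mul (hf.comp (differentiable_id.sub_const Z))

theorem re_fockShiftExponent (μ : ℝ) (Z : ι → ℂ) (z : ℝ) (W : ι → ℂ) :
    (fockShiftExponent μ Z z W).re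
      = -(μ / 4) * ∑ i, ‖Z i‖ ^ 2 + μ / 2 * (∑ i, conj (Z i) * W i).re := by
  simp only [fockShiftExponent, add_re, sub_re, mul_re, I_re, I_im, ofReal_re, ofReal_im,
    add_im]
  ring

theorem gaussian_mul_norm_fockShift_sq (μ : ℝ) (Z : ι → ℂ) (z : ℝ) (f : (ι → ℂ) → ℂ)
    (W : ι → ℂ) :
    Real.exp (-(μ / 2) * ∑ i, ‖W i‖ ^ 2) * ‖fockShift μ Z z f W‖ ^ 2
      = Real.exp (-(μ / 2) * ∑ i, ‖W i - Z i‖ ^ 2) * ‖f (W - Z)‖ ^ 2 := by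
  rw [fockShift, norm_mul, norm_exp, mul_pow, ← mul_assoc, sq (Real.exp _),
    ← Real.exp_add, ← Real.exp_add, re_fockShiftExponent, sum_norm_sub_sq]
  ring_nf

end FockShift

theorem UBF_gaussian_mul {n : ℕ} (μ : ℝ) (Z : Fin n → ℂ) (z : ℝ) (f : (Fin n → ℂ) → ℂ) :
    UBF μ (Z, z) (fun W => (Real.exp (-(μ / 4) * ∑ i, ‖W i‖ ^ 2) : ℂ) * f W)
      = fun W => (Real.exp (-(μ / 4) * ∑ i, ‖W i‖ ^ 2) : ℂ) * fockShift μ Z z f W := by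
  funext W
  simp only [UBF, fockShift, Pi.sub_apply]
  rw [← mul_assoc, ← mul_assoc, ofReal_exp, ofReal_exp, ← exp_add, ← exp_add]
  congr 2
  rw [sum_norm_sub_sq]
  unfold fockShiftExponent
  apply Complex.ext <;> simp <;> ring

theorem UBF_preserves_BargmannFock_general {n : ℕ} (μ : ℝ)
    (f : (Fin n → ℂ) → ℂ) (hf : Differentiable ℂ f)
    (hint : Integrable
      (fun W : Fin n → ℂ =>
        Real.exp (-(μ/2) * ∑ i, ‖W i‖^2) * ‖f W‖^2)
      volume)
    (Z : Fin n → ℂ) (z : ℝ) :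
    ∃ g : (Fin n → ℂ) → ℂ, Differentiable ℂ g ∧
      (UBF μ (Z, z) (fun W => (Real.exp (-(μ/4) * ∑ i, ‖W i‖^2) : ℂ) * f W)
        = fun W => (Real.exp (-(μ/4) * ∑ i, ‖W i‖^2) : ℂ) * g W) ∧
      Integrable
        (fun W : Fin n → ℂ =>
          Real.exp (-(μ/2) * ∑ i, ‖W i‖^2) * ‖g W‖^2)
        volume ∧
      (∫ W : Fin n → ℂ,
          Real.exp (-(μ/2) * ∑ i, ‖W i‖^2) * ‖g W‖^2)
        = ∫ W : Fin n → ℂ,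
            Real.exp (-(μ/2) * ∑ i, ‖W i‖^2) * ‖f W‖^2 := by
  have hweight : (fun W => Real.exp (-(μ/2) * ∑ i, ‖W i‖^2) * ‖fockShift μ Z z f W‖^2)
      = fun W => Real.exp (-(μ/2) * ∑ i, ‖(W - Z) i‖^2) * ‖f (W - Z)‖^2 :=
    funext (gaussian_mul_norm_fockShift_sq μ Z z f)
  refine ⟨fockShift μ Z z f, hf.fockShift μ Z z, UBF_gaussian_mul μ Z z f, ?_, ?_⟩
  · rw [hweight]
    exact hint.comp_sub_right Z
  · rw [hweight]
    exact integral_sub_right_eq_self (fun W => Real.exp (-(μ/2) * ∑ i, ‖W i‖^2) * ‖f W‖^2) Z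

/-- each `U_BF(Z,z)` preserves the Bargmann–Fock space: if
`φ(W) = exp(-(μ/4)|W|²) f(W)` with `f` entire and
`∫ exp(-(μ/2)|W|²)|f(W)|² dW < ∞` (`μ > 0`), then `U_BF(Z,z)φ` has the same
form (with some entire `g` whose weighted integral is finite) and the same
norm. -/
theorem UBF_preserves_BargmannFock {n : ℕ} (μ : ℝ) (hμ : 0 < μ)
    (f : (Fin n → ℂ) → ℂ) (hf : Differentiable ℂ f)
    (hint : Integrable
      (fun W : Fin n → ℂ =>
        Real.exp (-(μ/2) * ∑ i, ‖W i‖^2) * ‖f W‖^2)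
      volume)
    (Z : Fin n → ℂ) (z : ℝ) :
    ∃ g : (Fin n → ℂ) → ℂ, Differentiable ℂ g ∧
      (UBF μ (Z, z) (fun W => (Real.exp (-(μ/4) * ∑ i, ‖W i‖^2) : ℂ) * f W)
        = fun W => (Real.exp (-(μ/4) * ∑ i, ‖W i‖^2) : ℂ) * g W) ∧
      Integrable
        (fun W : Fin n → ℂ =>
          Real.exp (-(μ/2) * ∑ i, ‖W i‖^2) * ‖g W‖^2)
        volume ∧
      (∫ W : Fin n → ℂ,
          Real.exp (-(μ/2) * ∑ i, ‖W i‖^2) * ‖g W‖^2)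
        = ∫ W : Fin n → ℂ,
            Real.exp (-(μ/2) * ∑ i, ‖W i‖^2) * ‖f W‖^2 :=
  UBF_preserves_BargmannFock_general μ f hf hint Z z
end

section
/- With η_w := ρ(w)η satisfying the projective covariance η_{w·v} = e^{(iμ/2)Ω(w,v)} η_{w+v} for two projective families (in H and H') over a symplectic vector space V, the operator T = ∫_V |η'_v⟩⟨η_v| dv (assumed well-defined) satisfies T ∘ ρ(w) = ρ'(w) ∘ T for all w ∈ V. -/
/-!
Translating the integration variable by `w` (Lebesgue measure is translation invariant) and
using the covariance of `η` rewrites `⟪φ', T (ρ w φ)⟫` as `∫ c_w(v) ⟪φ', η' (v + w)⟫ ⟪η v, φ⟫ dv`,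
with the unimodular phase `c_w(v) = e^{(iμ/2)Ω(w,v)}`. Moving `ρ' w` to the left as its
inverse and using the covariance of `η'` produces the same integral for `⟪φ', ρ' w (T φ)⟫`.
-/

open MeasureTheory
open scoped InnerProductSpace

/-- Standard symplectic form on `V = ℝⁿ × ℝⁿ`. -/
noncomputable def Omega {n : ℕ} (v w : (Fin n → ℝ) × (Fin n → ℝ)) : ℝ :=
  ∑ i, v.1 i * w.2 i - ∑ i, v.2 i * w.1 i

section

open scoped ComplexConjugate

variable {𝕜 E E' : Type*} [RCLike 𝕜]
  [NormedAddCommGroup E] [InnerProductSpace 𝕜 E] [NormedAddCommGroup E'] [InnerProductSpace 𝕜 E']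

theorem LinearIsometry.inner_map_eq_mul_inner_of_map_eq_smul (U : E →ₗᵢ[𝕜] E') {x : E} {y : E'}
    {c : 𝕜} (hU : U x = c • y) (hc : ‖c‖ = 1) (z : E) : ⟪y, U z⟫_𝕜 = c * ⟪x, z⟫_𝕜 := by
  have hcc : c * conj c = 1 := by rw [RCLike.mul_conj, hc]; simp
  rw [← U.inner_map_map x z, hU, inner_smul_left, ← mul_assoc, hcc, one_mul]

theorem LinearIsometryEquiv.inner_symm_eq_mul_inner_of_map_eq_smul (U : E ≃ₗᵢ[𝕜] E') {x : E}
    {y : E'} {c : 𝕜} (hU : U x = c • y) (z : E') : ⟪U.symm z, x⟫_𝕜 = c * ⟪z, y⟫_𝕜 := by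
  rw [U.symm.inner_map_eq_flip, U.symm_symm, hU, inner_smul_right]

theorem ContinuousLinearMap.map_apply_eq_apply_map_of_covariant {G : Type*} [AddGroup G]
    [MeasurableSpace G] [MeasurableAdd G] (ν : Measure G) [ν.IsAddRightInvariant]
    (U : E →ₗᵢ[𝕜] E) (U' : E' ≃ₗᵢ[𝕜] E') (η : G → E) (η' : G → E') (w : G) (c : G → 𝕜)
    (hc : ∀ v, ‖c v‖ = 1) (hη : ∀ v, U (η v) = c v • η (v + w))
    (hη' : ∀ v, U' (η' v) = c v • η' (v + w)) (T : E →L[𝕜] E')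
    (hT : ∀ φ φ', ⟪φ', T φ⟫_𝕜 = ∫ v, ⟪φ', η' v⟫_𝕜 * ⟪η v, φ⟫_𝕜 ∂ν) (φ : E) :
    T (U φ) = U' (T φ) := by
  refine ext_inner_left 𝕜 fun φ' => ?_
  calc ⟪φ', T (U φ)⟫_𝕜
      = ∫ v, ⟪φ', η' (v + w)⟫_𝕜 * ⟪η (v + w), U φ⟫_𝕜 ∂ν := by
        rw [hT, integral_add_right_eq_self (fun v => ⟪φ', η' v⟫_𝕜 * ⟪η v, U φ⟫_𝕜) w]
    _ = ∫ v, c v * ⟪φ', η' (v + w)⟫_𝕜 * ⟪η v, φ⟫_𝕜 ∂ν := by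
        congr 1 with v
        rw [U.inner_map_eq_mul_inner_of_map_eq_smul (hη v) (hc v)]
        ring
    _ = ∫ v, ⟪U'.symm φ', η' v⟫_𝕜 * ⟪η v, φ⟫_𝕜 ∂ν := by
        simp only [U'.inner_symm_eq_mul_inner_of_map_eq_smul (hη' _)]
    _ = ⟪φ', U' (T φ)⟫_𝕜 := by
        rw [← hT, U'.symm.inner_map_eq_flip, U'.symm_symm]

end

theorem projective_intertwiner_general {n : ℕ} (μ : ℝ)
    {H H' : Type*}
    [NormedAddCommGroup H] [InnerProductSpace ℂ H]
    [NormedAddCommGroup H'] [InnerProductSpace ℂ H']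
    (ρ : (Fin n → ℝ) × (Fin n → ℝ) → (H ≃ₗᵢ[ℂ] H))
    (ρ' : (Fin n → ℝ) × (Fin n → ℝ) → (H' ≃ₗᵢ[ℂ] H'))
    (η : (Fin n → ℝ) × (Fin n → ℝ) → H)
    (η' : (Fin n → ℝ) × (Fin n → ℝ) → H')
    (hη : ∀ w v, ρ w (η v)
      = Complex.exp (Complex.I * (μ : ℂ) / 2 * (Omega w v : ℂ)) • η (v + w))
    (hη' : ∀ w v, ρ' w (η' v)
      = Complex.exp (Complex.I * (μ : ℂ) / 2 * (Omega w v : ℂ)) • η' (v + w))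
    (T : H →L[ℂ] H')
    (hT : ∀ (φ : H) (φ' : H'),
      ⟪φ', T φ⟫_ℂ = ∫ v : (Fin n → ℝ) × (Fin n → ℝ),
        ⟪φ', η' v⟫_ℂ * ⟪η v, φ⟫_ℂ) :
    ∀ (w : (Fin n → ℝ) × (Fin n → ℝ)) (φ : H), T (ρ w φ) = ρ' w (T φ) := by
  intro w φ
  have hphase (v : (Fin n → ℝ) × (Fin n → ℝ)) :
      ‖Complex.exp (Complex.I * (μ : ℂ) / 2 * (Omega w v : ℂ))‖ = 1 := by
    rw [← Complex.norm_exp_ofReal_mul_I (μ / 2 * Omega w v)]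
    push_cast
    congr 1; ring
  -- instance search does not see through `volume = volume.prod volume` on a product
  have : (volume : Measure ((Fin n → ℝ) × (Fin n → ℝ))).IsAddRightInvariant :=
    inferInstanceAs (volume.prod volume).IsAddRightInvariant
  exact (T.map_apply_eq_apply_map_of_covariant volume (ρ w).toLinearIsometry (ρ' w) η η' w _
    hphase (hη w) (hη' w) hT) φ

/-- with projective covariance `ρ(w)η_v = e^{(iμ/2)Ω(w,v)} η_{v+w}`
for two families (in `H` and `H'`) over a symplectic vector space `V`, the
operator `T = ∫_V |η'_v⟩⟨η_v| dv` (assumed well-defined, weakly by an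
absolutely convergent integral) satisfies `T ∘ ρ(w) = ρ'(w) ∘ T` for all
`w ∈ V`. -/
theorem projective_intertwiner {n : ℕ} (μ : ℝ)
    {H H' : Type*}
    [NormedAddCommGroup H] [InnerProductSpace ℂ H] [CompleteSpace H]
    [NormedAddCommGroup H'] [InnerProductSpace ℂ H'] [CompleteSpace H']
    (ρ : (Fin n → ℝ) × (Fin n → ℝ) → (H ≃ₗᵢ[ℂ] H))
    (ρ' : (Fin n → ℝ) × (Fin n → ℝ) → (H' ≃ₗᵢ[ℂ] H'))
    (η : (Fin n → ℝ) × (Fin n → ℝ) → H)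
    (η' : (Fin n → ℝ) × (Fin n → ℝ) → H')
    (hη : ∀ w v, ρ w (η v)
      = Complex.exp (Complex.I * (μ : ℂ) / 2 * (Omega w v : ℂ)) • η (v + w))
    (hη' : ∀ w v, ρ' w (η' v)
      = Complex.exp (Complex.I * (μ : ℂ) / 2 * (Omega w v : ℂ)) • η' (v + w))
    (T : H →L[ℂ] H')
    (hconv : ∀ (φ : H) (φ' : H'),
      Integrable (fun v : (Fin n → ℝ) × (Fin n → ℝ) =>
        ⟪φ', η' v⟫_ℂ * ⟪η v, φ⟫_ℂ) volume)
    (hT : ∀ (φ : H) (φ' : H'),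
      ⟪φ', T φ⟫_ℂ = ∫ v : (Fin n → ℝ) × (Fin n → ℝ),
        ⟪φ', η' v⟫_ℂ * ⟪η v, φ⟫_ℂ) :
    ∀ (w : (Fin n → ℝ) × (Fin n → ℝ)) (φ : H), T (ρ w φ) = ρ' w (T φ) :=
  projective_intertwiner_general μ ρ ρ' η η' hη hη' T hT
end
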